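/- If an abstract bundle B is an image under abstraction map α of a cryptographic bundle C, and C is acyclic with well-founded order ⪯_C, then B is acyclic: the induced relation →_B ∪ ⇒_B on the nodes of B has no cycles, since m →_B n implies m_c ⪯_C n_c for concrete preimages and strand order is preserved by the bijection φ. -/
import Mathlib


/-- If an abstract bundle `B` is an image, under an abstraction map, of a
cryptographic bundle `C` whose causal order `⪯_C` is a (well-founded) partial
order, then `B` is acyclic: the relation `→_B ∪ ⇒_B` has no cycles.  Here
`ψ` sends each abstract node to a concrete preimage (via the bijection `φ` on
strands and corresponding positions, so `ψ` is injective); transmission edges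
`m →_B n` imply `ψ m ⪯_C ψ n`, strand order is preserved by `φ`, and no
abstract edge is a self-loop (transmissions differ from receptions, and a node
differs from its strand successor). -/
theorem image_of_bundle_acyclic {Na Nc : Type}
    (edgeS edgeM : Na → Na → Prop) (precC : Nc → Nc → Prop) (ψ : Na → Nc)
    (hrefl : Reflexive precC) (htrans : Transitive precC)
    (hantisymm : AntiSymmetric precC)
    (hwf : WellFounded (fun a b : Nc => precC a b ∧ a ≠ b))
    (hinj : Function.Injective ψ)
    (hM : ∀ m n, edgeM m n → precC (ψ m) (ψ n))
    (hS : ∀ m n, edgeS m n → precC (ψ m) (ψ n))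
    (hMirr : ∀ n, ¬ edgeM n n) (hSirr : ∀ n, ¬ edgeS n n) :
    ∀ n : Na, ¬ Relation.TransGen (fun a b => edgeS a b ∨ edgeM a b) n n := by
  intro n hn
  have key : ∀ a b, Relation.TransGen (fun a b => edgeS a b ∨ edgeM a b) a b →
      precC (ψ a) (ψ b) ∧ ψ a ≠ ψ b := by
    intro a b h
    induction h with
    | single h =>
        rcases h with h | h
        · refine ⟨hS _ _ h, fun he => ?_⟩
          exact hSirr _ (hinj he ▸ h)
        · refine ⟨hM _ _ h, fun he => ?_⟩
          exact hMirr _ (hinj he ▸ h)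
    | tail h' hstep ih =>
        rename_i b c
        have hbc : precC (ψ b) (ψ c) ∧ ψ b ≠ ψ c := by
          rcases hstep with h | h
          · exact ⟨hS _ _ h, fun he => hSirr _ (hinj he ▸ h)⟩
          · exact ⟨hM _ _ h, fun he => hMirr _ (hinj he ▸ h)⟩
        refine ⟨htrans ih.1 hbc.1, fun he => ?_⟩
        have : ψ a = ψ b := hantisymm ih.1 (he ▸ hbc.1)
        exact ih.2 this
  exact (key n n hn).2 rfl
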